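/- arXiv:2408.15208 — 3 statements merged into one kernel-verified Lean document; each statement's English description precedes it below -/
import Mathlib

section
/- The Arens–Eells seminorm ‖·‖_d on molecules of a pseudometric space (M,d) is a norm if and only if d is a metric. -/
noncomputable section

/-- The space of molecules of `M`: finitely supported real functions summing to zero. -/
def Mol (M : Type*) : Submodule ℝ (M →₀ ℝ) :=
  LinearMap.ker (Finsupp.lsum ℝ (fun _ : M => (LinearMap.id : ℝ →ₗ[ℝ] ℝ)))

/-- The elementary molecule `χ_x - χ_y`. -/
def mol {M : Type*} (x y : M) : Mol M :=
  ⟨Finsupp.single x 1 - Finsupp.single y 1, by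
    classical
    simp [Mol, LinearMap.mem_ker, Finsupp.sum_sub_index, Finsupp.sum_single_index]⟩

/-- The Arens–Eells (Kantorovich–Rubinstein) seminorm on molecules:
`‖m‖ = inf { Σ |cᵢ| d(xᵢ,yᵢ) : m = Σ cᵢ (χ_{xᵢ} - χ_{yᵢ}) }`. -/
def aeNorm {M : Type*} [PseudoMetricSpace M] (m : Mol M) : ℝ :=
  sInf {s : ℝ | ∃ (n : ℕ) (c : Fin n → ℝ) (x y : Fin n → M),
    (m : M →₀ ℝ) = ∑ i, c i • (Finsupp.single (x i) 1 - Finsupp.single (y i) 1) ∧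
    s = ∑ i, |c i| * dist (x i) (y i)}

/-! If `d x y = 0`, the molecule `χ_x - χ_y` has norm at most `d x y = 0`, so definiteness forces
`x = y`. Conversely, every 1-Lipschitz `f` gives the lower bound `|Σ m(z) f(z)| ≤ ‖m‖`, since on
`c (χ_x - χ_y)` the pairing is `c (f x - f y)`. When `d` is a metric and `p` lies in the support of
`m ≠ 0`, take `ε > 0` below the distance from `p` to the rest of the support; the bump
`f = max (ε - d(·, p)) 0` then pairs with `m` to `m(p) ε`, so `‖m‖ ≥ |m(p)| ε > 0`. -/

open Finsupp

section

variable {M : Type*}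

lemma Finset.exists_fin_sum_eq {α β : Type*} [AddCommMonoid β] (s : Finset α) (g : α → β) :
    ∃ (n : ℕ) (e : Fin n → α), ∑ i, g (e i) = ∑ z ∈ s, g z :=
  ⟨s.card, fun i => s.equivFin.symm i,
    (Fintype.sum_equiv s.equivFin.symm _ (fun z : s => g z) fun _ => rfl).trans (s.sum_coe_sort g)⟩

namespace Mol

lemma sum_eq_zero (m : Mol M) : ∑ z ∈ (m : M →₀ ℝ).support, (m : M →₀ ℝ) z = 0 := by
  simpa [Mol, LinearMap.mem_ker, Finsupp.sum] using m.2

lemma eq_sum_smul_sub_single (m : Mol M) (p : M) :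
    (m : M →₀ ℝ) = ∑ z ∈ (m : M →₀ ℝ).support, (m : M →₀ ℝ) z • (single z 1 - single p 1) := by
  simp only [smul_sub, Finset.sum_sub_distrib]
  rw [← Finset.sum_smul, sum_eq_zero, zero_smul, sub_zero]
  simp only [smul_single_one]
  exact (sum_single _).symm

end Mol

lemma mol_eq_zero_iff {x y : M} : mol x y = 0 ↔ x = y := by
  simp [mol, ← Subtype.coe_inj, sub_eq_zero, single_eq_single_iff]

variable [PseudoMetricSpace M]

def aeCosts (m : Mol M) : Set ℝ :=
  {s : ℝ | ∃ (n : ℕ) (c : Fin n → ℝ) (x y : Fin n → M),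
    (m : M →₀ ℝ) = ∑ i, c i • (single (x i) 1 - single (y i) 1) ∧
    s = ∑ i, |c i| * dist (x i) (y i)}

lemma aeNorm_eq_sInf_aeCosts (m : Mol M) : aeNorm m = sInf (aeCosts m) := rfl

lemma nonneg_of_mem_aeCosts {m : Mol M} {s : ℝ} (hs : s ∈ aeCosts m) : 0 ≤ s := by
  obtain ⟨n, c, x, y, -, rfl⟩ := hs
  positivity

lemma aeCosts_nonempty (m : Mol M) : (aeCosts m).Nonempty := by
  rcases isEmpty_or_nonempty M with hM | ⟨⟨p⟩⟩
  · exact ⟨0, 0, Fin.elim0, Fin.elim0, Fin.elim0, Subsingleton.elim _ _, rfl⟩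
  obtain ⟨n, e, he⟩ := Finset.exists_fin_sum_eq (m : M →₀ ℝ).support
    fun z => (m : M →₀ ℝ) z • (single z (1 : ℝ) - single p 1)
  exact ⟨_, n, fun i => (m : M →₀ ℝ) (e i), e, fun _ => p,
    (Mol.eq_sum_smul_sub_single m p).trans he.symm, rfl⟩

lemma aeNorm_nonneg (m : Mol M) : 0 ≤ aeNorm m := by
  rw [aeNorm_eq_sInf_aeCosts]
  exact Real.sInf_nonneg fun _ => nonneg_of_mem_aeCosts

lemma aeNorm_mol_le_dist (x y : M) : aeNorm (mol x y) ≤ dist x y := by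
  rw [aeNorm_eq_sInf_aeCosts]
  exact csInf_le ⟨0, fun _ => nonneg_of_mem_aeCosts⟩
    ⟨1, fun _ => 1, fun _ => x, fun _ => y, by simp [mol], by simp⟩

lemma abs_linearCombination_le_aeNorm {f : M → ℝ} (hf : LipschitzWith 1 f) (m : Mol M) :
    |linearCombination ℝ f (m : M →₀ ℝ)| ≤ aeNorm m := by
  rw [aeNorm_eq_sInf_aeCosts]
  refine le_csInf (aeCosts_nonempty m) ?_
  rintro _ ⟨n, c, x, y, hm, rfl⟩
  calc |linearCombination ℝ f (m : M →₀ ℝ)| = |∑ i, c i * (f (x i) - f (y i))| := by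
        simp [hm, map_sum, linearCombination_single, mul_sub]
    _ ≤ ∑ i, |c i * (f (x i) - f (y i))| := Finset.abs_sum_le_sum_abs _ _
    _ ≤ ∑ i, |c i| * dist (x i) (y i) := Finset.sum_le_sum fun i _ => by
        rw [abs_mul, ← Real.dist_eq]
        exact mul_le_mul_of_nonneg_left (by simpa using hf.dist_le_mul (x i) (y i)) (abs_nonneg _)

lemma lipschitzWith_one_max_sub_dist (p : M) (ε : ℝ) :
    LipschitzWith 1 fun z => max (ε - dist z p) 0 :=
  LipschitzWith.of_le_add fun x y => max_le
    (by linarith [dist_triangle y x p, dist_comm x y, le_max_left (ε - dist y p) 0])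
    (by positivity)

lemma aeNorm_pos_of_ne_zero [T0Space M] {m : Mol M} (hm : m ≠ 0) : 0 < aeNorm m := by
  classical
  obtain ⟨p, hp⟩ : (m : M →₀ ℝ).support.Nonempty :=
    support_nonempty_iff.2 fun h => hm (Subtype.ext h)
  -- finite sets are closed since a T0 pseudometric space is T1
  obtain ⟨ε, hε, hball⟩ := Metric.isOpen_iff.1
    ((m : M →₀ ℝ).support.erase p).finite_toSet.isClosed.isOpen_compl p (by simp)
  set f : M → ℝ := fun z => max (ε - dist z p) 0
  have hf_off : ∀ z ∈ (m : M →₀ ℝ).support, z ≠ p → f z = 0 := fun z hz hzp =>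
    max_eq_right <| sub_nonpos.2 <| not_lt.1 fun h =>
      absurd (Finset.mem_erase.2 ⟨hzp, hz⟩) (hball (Metric.mem_ball.2 h))
  have hpair : linearCombination ℝ f (m : M →₀ ℝ) = (m : M →₀ ℝ) p * ε := by
    rw [linearCombination_apply, Finsupp.sum_eq_single p
      (fun z hz hzp => by rw [hf_off z (mem_support_iff.2 hz) hzp, smul_zero]) (by simp)]
    simp [f, hε.le]
  calc 0 < |(m : M →₀ ℝ) p| * ε := mul_pos (abs_pos.2 (mem_support_iff.1 hp)) hε
    _ = |linearCombination ℝ f (m : M →₀ ℝ)| := by rw [hpair, abs_mul, abs_of_pos hε]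
    _ ≤ aeNorm m := abs_linearCombination_le_aeNorm (lipschitzWith_one_max_sub_dist p ε) m

end

/-- For a pseudometric space `(M,d)`, the Arens–Eells seminorm on the
space of molecules is a norm (i.e. definite) if and only if `d` is a metric. -/
theorem aeNorm_norm_iff_metric {M : Type*} [PseudoMetricSpace M] :
    (∀ m : Mol M, aeNorm m = 0 → m = 0) ↔ (∀ x y : M, dist x y = 0 → x = y) := by
  constructor
  · intro h x y hxy
    exact mol_eq_zero_iff.1 (h _ (le_antisymm (hxy ▸ aeNorm_mol_le_dist x y) (aeNorm_nonneg _)))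
  · intro h m hm
    have : T0Space M :=
      (t0Space_iff_inseparable M).2 fun x y hxy => h x y (Metric.inseparable_iff.1 hxy)
    by_contra hm0
    exact (aeNorm_pos_of_ne_zero hm0).ne' hm
end
end

section
/- For every normed space V and every subgroup G of the group of linear surjective isometries of V with the strong operator topology, the dual action of G on the weak-star compact unit ball B_{V*}, given by (g·φ)(v) = φ(g⁻¹v), is jointly continuous. -/
/-!
Inversion is continuous on surjective isometries in the strong operator topology, so
`g ↦ π g⁻¹ v` is norm-continuous. On the unit ball the pairing is then jointly continuous:
`φ w - φ₀ w₀ = φ (w - w₀) + (φ - φ₀) w₀`, where the first term is at most `‖w - w₀‖` and the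
second is weak-star small.
-/

noncomputable section

/-- The dual action of `G` on the weak-star dual: `(g·φ)(v) = φ(g⁻¹ v)`, where `G`
acts on `V` through a homomorphism `π` into the group of surjective linear isometries. -/
def dualAct {G V : Type*} [Group G] [NormedAddCommGroup V] [NormedSpace ℝ V]
    (π : G →* (V ≃ₗᵢ[ℝ] V)) (g : G) (φ : WeakDual ℝ V) : WeakDual ℝ V :=
  ContinuousLinearMap.comp (φ : V →L[ℝ] ℝ)
    ((π g⁻¹).toContinuousLinearEquiv : V →L[ℝ] V)

/-- `‖e⁻¹ v - e₀⁻¹ v‖ = ‖e w - e₀ w‖` for `w = e₀⁻¹ v`, by applying the isometry `e`. -/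
theorem LinearIsometryEquiv.continuous_symm_apply {X R E : Type*} [TopologicalSpace X]
    [Semiring R] [SeminormedAddCommGroup E] [Module R E] {f : X → E ≃ₗᵢ[R] E}
    (hf : ∀ v, Continuous fun x => f x v) (v : E) :
    Continuous fun x => (f x).symm v := by
  refine continuous_iff_continuousAt.2 fun x₀ => ?_
  have hdist : ∀ x, dist ((f x).symm v) ((f x₀).symm v) =
      dist (f x ((f x₀).symm v)) (f x₀ ((f x₀).symm v)) := fun x => by
    rw [← (f x).dist_map, LinearIsometryEquiv.apply_symm_apply,
      LinearIsometryEquiv.apply_symm_apply, dist_comm]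
  rw [ContinuousAt, tendsto_iff_dist_tendsto_zero]
  simpa only [hdist] using tendsto_iff_dist_tendsto_zero.1 ((hf ((f x₀).symm v)).tendsto x₀)

theorem WeakDual.continuous_apply_of_norm_le {X 𝕜 E : Type*} [TopologicalSpace X]
    [NormedField 𝕜] [SeminormedAddCommGroup E] [NormedSpace 𝕜 E]
    {φ : X → WeakDual 𝕜 E} {u : X → E} (C : ℝ) (hbound : ∀ x v, ‖φ x v‖ ≤ C * ‖v‖)
    (hφ : Continuous φ) (hu : Continuous u) :
    Continuous fun x => φ x (u x) := by
  refine continuous_iff_continuousAt.2 fun x₀ => ?_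
  have hsplit : ∀ x, φ x (u x) = φ x (u x - u x₀) + φ x (u x₀) := fun x => by
    rw [map_sub, sub_add_cancel]
  have hsmall : Filter.Tendsto (fun x => φ x (u x - u x₀)) (nhds x₀) (nhds 0) := by
    refine squeeze_zero_norm (fun x => hbound x _) ?_
    simpa using ((hu.sub (continuous_const (y := u x₀))).norm.const_mul C).tendsto x₀
  have hfixed : ContinuousAt (fun x => φ x (u x₀)) x₀ :=
    ((WeakDual.eval_continuous (u x₀)).comp hφ).continuousAt
  refine ContinuousAt.congr ?_ (Filter.Eventually.of_forall fun x => (hsplit x).symm)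
  simpa only [ContinuousAt, sub_self, map_zero, zero_add] using hsmall.add hfixed

theorem dualAct_apply {G V : Type*} [Group G] [NormedAddCommGroup V] [NormedSpace ℝ V]
    (π : G →* (V ≃ₗᵢ[ℝ] V)) (g : G) (φ : WeakDual ℝ V) (v : V) :
    dualAct π g φ v = φ ((π g).symm v) := by
  rw [dualAct, map_inv, ← LinearIsometryEquiv.inv_def]
  rfl

theorem dual_action_continuous_general {G V : Type*} [Group G] [TopologicalSpace G]
    [NormedAddCommGroup V] [NormedSpace ℝ V]
    (π : G →* (V ≃ₗᵢ[ℝ] V)) (hπ : ∀ v : V, Continuous fun g : G => π g v) :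
    (∀ (g : G) (φ : WeakDual ℝ V), (∀ v : V, |φ v| ≤ ‖v‖) →
        ∀ v : V, |dualAct π g φ v| ≤ ‖v‖) ∧
      Continuous (fun p :
          G × {φ : WeakDual ℝ V // ∀ v : V, |φ.1 v| ≤ ‖v‖} =>
        dualAct π p.1 p.2.1) := by
  refine ⟨fun g φ hφ v => ?_, WeakDual.continuous_of_continuous_eval fun v => ?_⟩
  · rw [dualAct_apply, ← (π g).symm.norm_map v]
    exact hφ _
  · simp only [dualAct_apply]
    refine WeakDual.continuous_apply_of_norm_le 1 (fun p w => ?_)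
      (continuous_subtype_val.comp continuous_snd)
      ((LinearIsometryEquiv.continuous_symm_apply hπ v).comp continuous_fst)
    rw [one_mul, Real.norm_eq_abs]
    exact p.2.2 w

/-- For every normed space `V` and every topological group `G` mapping
into the group `Is(V)` of surjective linear isometries such that the inclusion is
continuous for the strong operator topology (orbit maps are continuous), the dual
action of `G` on the weak-star compact unit ball `B_{V*}` is jointly continuous
(and maps the ball to itself). -/
theorem dual_action_continuous {G V : Type*} [Group G] [TopologicalSpace G]
    [IsTopologicalGroup G] [NormedAddCommGroup V] [NormedSpace ℝ V]
    (π : G →* (V ≃ₗᵢ[ℝ] V)) (hπ : ∀ v : V, Continuous fun g : G => π g v) :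
    (∀ (g : G) (φ : WeakDual ℝ V), (∀ v : V, |φ v| ≤ ‖v‖) →
        ∀ v : V, |dualAct π g φ v| ≤ ‖v‖) ∧
      Continuous (fun p :
          G × {φ : WeakDual ℝ V // ∀ v : V, |φ.1 v| ≤ ‖v‖} =>
        dualAct π p.1 p.2.1) :=
  dual_action_continuous_general π hπ
end
end

section
/- If d is a bounded stable metric on a group G (i.e., for all sequences (g_n), (h_m) in G the double limits lim_n lim_m d(g_n h_m, e) and lim_m lim_n d(g_n h_m, e) coincide whenever both exist), then for every a, v ∈ G the matrix coefficient m(g) = d(a, g·v) − d(a, e) (for the left translation action of G on itself) is a weakly almost periodic function on G. -/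
/-- Grothendieck's double limit property for a function `f : G → ℝ`: for all sequences
`(uₙ)`, `(vₘ)` in `G`, the iterated limits `limₙ limₘ f (uₙ * vₘ)` and
`limₘ limₙ f (uₙ * vₘ)` coincide whenever both exist.  By Grothendieck's criterion,
a bounded function is weakly almost periodic iff it has this property. -/
def DoubleLimitProp {G : Type*} [Group G] (f : G → ℝ) : Prop :=
  ∀ (u v : ℕ → G) (c c' : ℕ → ℝ) (r s : ℝ),
    (∀ n, Filter.Tendsto (fun m => f (u n * v m)) Filter.atTop (nhds (c n))) →
    Filter.Tendsto c Filter.atTop (nhds r) →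
    (∀ m, Filter.Tendsto (fun n => f (u n * v m)) Filter.atTop (nhds (c' m))) →
    Filter.Tendsto c' Filter.atTop (nhds s) →
    r = s

/-- If `d` is a bounded stable left-invariant metric on a group `G`
(stability: the double limits of `d (gₙ * hₘ) 1` coincide whenever both exist), then
for all `a v ∈ G` the matrix coefficient `g ↦ d a (g * v) - d a 1` of the left
translation action is weakly almost periodic (has the double limit property). -/
theorem stable_metric_matrix_coefficient_wap {G : Type*} [Group G] (d : G → G → ℝ)
    (hbdd : ∃ C : ℝ, ∀ x y : G, d x y ≤ C)
    (hrefl : ∀ x : G, d x x = 0)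
    (hpos : ∀ x y : G, x ≠ y → 0 < d x y)
    (hsymm : ∀ x y : G, d x y = d y x)
    (htri : ∀ x y w : G, d x w ≤ d x y + d y w)
    (hinv : ∀ g x y : G, d (g * x) (g * y) = d x y)
    (hstable : DoubleLimitProp (fun g : G => d g 1)) :
    ∀ a v : G, DoubleLimitProp (fun g : G => d a (g * v) - d a 1) := by
  intro a b
  intro u w c c' r s h1 hc h3 hc'
  have key : ∀ g : G, d a g = d (g⁻¹ * a) 1 := by
    intro g
    have := hinv g⁻¹ a g
    simpa using this.symm
  have harg : ∀ n m, d a (u n * w m * b) - d a 1 + d a 1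
      = d (b⁻¹ * (w m)⁻¹ * ((u n)⁻¹ * a)) 1 := by
    intro n m
    have : d a (u n * w m * b) = d ((u n * w m * b)⁻¹ * a) 1 := key _
    rw [sub_add_cancel, this]
    congr 1
    group
  have hstab := hstable (fun m => b⁻¹ * (w m)⁻¹) (fun n => (u n)⁻¹ * a)
    (fun m => c' m + d a 1) (fun n => c n + d a 1) (s + d a 1) (r + d a 1)
    (fun m => ((h3 m).add_const (d a 1)).congr (fun n => harg n m))
    (hc'.add_const (d a 1))
    (fun n => ((h1 n).add_const (d a 1)).congr (fun m => harg n m))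
    (hc.add_const (d a 1))
  linarith
end
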